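/- If a probability measure μ on [0,1] ∪ {∞} satisfies ∫_{[0,t]} s dμ(s) = μ([0,t])² for all t ∈ [0,1] and μ has an atom of mass c > 0 at some t ∈ [0,1], then c = 2(t/2 − μ([0,t))), i.e., c = t − 2μ([0,t)). -/

import Mathlib

/-!
Write `ν = μ.withDensity id` (so `ν(A) = ∫_A s dμ(s)`), `B = μ([0,t))` and `c = μ({t})`. The
hypothesis says `ν([0,s]) = μ([0,s])²` for `s ≤ t`; continuity from below of both measures
along `s ↑ t` gives `ν([0,t)) = B²`. Since `ν({t}) = t c`, the identity at `t` reads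
`(B + c)² = B² + t c`, i.e. `c (2B + c) = t c`, and `c` may be cancelled because `0 < c < ∞`.
-/

open MeasureTheory Set Filter Topology
open scoped ENNReal

theorem tendsto_measure_Iic_of_lt_of_tendsto {α : Type*} [MeasurableSpace α]
    [ConditionallyCompleteLinearOrder α] [TopologicalSpace α] [ClosedIicTopology α]
    [OpensMeasurableSpace α] (μ : Measure α) {u : ℕ → α} {T : α} (hu : Monotone u)
    (hlt : ∀ n, u n < T) (hlim : Tendsto u atTop (𝓝 T)) :
    Tendsto (fun n => μ (Iic (u n))) atTop (𝓝 (μ (Iio T))) := by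
  rw [← iUnion_Iic_eq_Iio_of_lt_of_tendsto hlt hlim]
  exact tendsto_measure_iUnion_atTop fun m n hmn => Iic_subset_Iic.2 (hu hmn)

theorem measure_Iio_eq_comp_of_forall_lt {α : Type*} [MeasurableSpace α]
    [ConditionallyCompleteLinearOrder α] [TopologicalSpace α] [OrderTopology α]
    [DenselyOrdered α] [FirstCountableTopology α] [OpensMeasurableSpace α]
    {μ ν : Measure α} {g : ℝ≥0∞ → ℝ≥0∞} (hg : Continuous g) {T : α}
    (hg₀ : g 0 = 0) (h : ∀ s < T, ν (Iic s) = g (μ (Iic s))) :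
    ν (Iio T) = g (μ (Iio T)) := by
  by_cases hT : ∃ y, y < T
  · obtain ⟨y, hy⟩ := hT
    obtain ⟨u, hu, hmem, hlim⟩ := exists_seq_strictMono_tendsto' hy
    have hlt : ∀ n, u n < T := fun n => (hmem n).2
    refine tendsto_nhds_unique (tendsto_measure_Iic_of_lt_of_tendsto ν hu.monotone hlt hlim) ?_
    simp_rw [h _ (hlt _)]
    exact (hg.tendsto _).comp (tendsto_measure_Iic_of_lt_of_tendsto μ hu.monotone hlt hlim)
  · have hempty : Iio T = ∅ := eq_empty_of_forall_notMem fun y hy => hT ⟨y, hy⟩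
    rw [hempty, measure_empty, measure_empty, hg₀]

theorem ENNReal.add_two_mul_eq_of_add_sq_eq {b c x : ℝ≥0∞} (hb : b ≠ ⊤) (hc₀ : c ≠ 0)
    (hc : c ≠ ⊤) (h : (b + c) ^ 2 = b ^ 2 + x * c) : c + 2 * b = x := by
  have h' : b ^ 2 + (c + 2 * b) * c = b ^ 2 + x * c := by rw [← h]; ring
  exact (ENNReal.mul_left_inj hc₀ hc).1 ((ENNReal.add_right_inj (ENNReal.pow_ne_top hb)).1 h')

theorem stmt4 (μ : Measure ℝ≥0∞) [IsProbabilityMeasure μ]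
    (hRDE : ∀ t ∈ Set.Icc (0:ℝ) 1,
      ∫⁻ s in Set.Icc 0 (ENNReal.ofReal t), s ∂μ
        = (μ (Set.Icc 0 (ENNReal.ofReal t)))^2)
    (t : ℝ) (ht : t ∈ Set.Icc (0:ℝ) 1)
    (hatom : 0 < μ {ENNReal.ofReal t}) :
    μ {ENNReal.ofReal t} + 2 * μ (Set.Ico 0 (ENNReal.ofReal t))
      = ENNReal.ofReal t := by
  set T := ENNReal.ofReal t
  set ν := μ.withDensity id
  have hIic : ∀ s ≤ T, ν (Iic s) = μ (Iic s) ^ 2 := by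
    intro s hs
    have hs_one : s.toReal ≤ 1 := ENNReal.toReal_le_of_le_ofReal zero_le_one
      (hs.trans (ENNReal.ofReal_le_ofReal ht.2))
    have := hRDE s.toReal ⟨ENNReal.toReal_nonneg, hs_one⟩
    rw [ENNReal.ofReal_toReal (ne_top_of_le_ne_top ENNReal.ofReal_ne_top hs), ← bot_eq_zero,
      Icc_bot] at this
    rw [withDensity_apply _ measurableSet_Iic]
    exact this
  have hIio : ν (Iio T) = μ (Iio T) ^ 2 :=
    measure_Iio_eq_comp_of_forall_lt (ENNReal.continuous_pow 2) (zero_pow two_ne_zero)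
      fun s hs => hIic s hs.le
  have hsplit : ∀ ρ : Measure ℝ≥0∞, ρ (Iic T) = ρ (Iio T) + ρ {T} := fun ρ => by
    rw [← Iio_union_right, measure_union (by simp) (measurableSet_singleton T)]
  have hνT : ν {T} = T * μ {T} := by
    rw [withDensity_apply _ (measurableSet_singleton T), lintegral_singleton]; rfl
  rw [ENNReal.Ico_eq_Iio]
  refine ENNReal.add_two_mul_eq_of_add_sq_eq (measure_ne_top μ _) hatom.ne'
    (measure_ne_top μ _) ?_
  calc (μ (Iio T) + μ {T}) ^ 2 = μ (Iic T) ^ 2 := by rw [hsplit]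
    _ = ν (Iic T) := (hIic T le_rfl).symm
    _ = ν (Iio T) + ν {T} := hsplit ν
    _ = μ (Iio T) ^ 2 + T * μ {T} := by rw [hIio, hνT]
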